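/- arXiv:2206.02678 — 7 statements merged into one kernel-verified Lean document; each statement's English description precedes it below -/
import Mathlib

section
/- Existence of a CVaR distortion weighting: for any probability mass function p on a finite type S, value function V : S → ℝ, and α ∈ (0,1], there exists μ : S → ℝ with 0 ≤ μ(s) ≤ p(s) for all s, ∑_s μ(s) = α, and (1/α) · ∑_s μ(s) · V(s) = CVaR^α(V; p), where μ is supported on the states with the lowest values of V (i.e., if μ(s) > 0 and μ(s') < p(s') then V(s) ≤ V(s')). -/
open Finset

noncomputable def cvar {S : Type*} [Fintype S] (α : ℝ) (p : S → ℝ) (V : S → ℝ) : ℝ :=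
  ⨆ x : ℝ, (x - (1 / α) * ∑ s, p s * max (x - V s) 0)

theorem cvar_distortion_exists {S : Type*} [Fintype S] [Nonempty S]
    (p V : S → ℝ) (α : ℝ) (hα : 0 < α) (hα1 : α ≤ 1)
    (hp : ∀ s, 0 ≤ p s) (hp1 : ∑ s, p s = 1) :
    ∃ μ : S → ℝ, (∀ s, 0 ≤ μ s ∧ μ s ≤ p s) ∧ (∑ s, μ s = α) ∧
      ((1 / α) * ∑ s, μ s * V s = cvar α p V) ∧
      (∀ s s', 0 < μ s → μ s' < p s' → V s ≤ V s') := by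
  classical
  set T : Finset ℝ := (univ.image V).filter
      (fun x => α ≤ ∑ s ∈ univ.filter (fun s => V s ≤ x), p s) with hTdef
  have himne : (univ.image V).Nonempty := (univ_nonempty).image V
  have hTne : T.Nonempty := by
    refine ⟨(univ.image V).max' himne, ?_⟩
    rw [hTdef, mem_filter]
    refine ⟨max'_mem _ _, ?_⟩
    have hfil : univ.filter (fun s => V s ≤ (univ.image V).max' himne) = univ := by
      apply filter_true_of_mem
      intro s _
      exact le_max' _ _ (mem_image_of_mem V (mem_univ s))
    rw [hfil, hp1]; exact hα1
  set x₀ : ℝ := T.min' hTne with hx₀def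
  have hx₀T : x₀ ∈ T := min'_mem _ _
  set A : ℝ := ∑ s ∈ univ.filter (fun s => V s < x₀), p s with hAdef
  set B : ℝ := ∑ s ∈ univ.filter (fun s => V s ≤ x₀), p s with hBdef
  set c : ℝ := ∑ s ∈ univ.filter (fun s => V s = x₀), p s with hcdef
  have hB : α ≤ B := (mem_filter.mp hx₀T).2
  have hA : A < α := by
    by_contra h
    push_neg at h
    have hSlne : (univ.filter (fun s => V s < x₀)).Nonempty := by
      rcases eq_or_ne (univ.filter (fun s => V s < x₀)) ∅ with he | he
      · rw [hAdef, he, sum_empty] at h; linarith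
      · exact nonempty_of_ne_empty he
    set y : ℝ := ((univ.filter (fun s => V s < x₀)).image V).max' (hSlne.image V) with hy
    have hymem : y ∈ (univ.filter (fun s => V s < x₀)).image V := max'_mem _ _
    have hylt : y < x₀ := by
      rcases mem_image.mp hymem with ⟨s, hs, hVs⟩
      rw [← hVs]
      exact (mem_filter.mp hs).2
    have hyT : y ∈ T := by
      rw [hTdef, mem_filter]
      constructor
      · rcases mem_image.mp hymem with ⟨s, _, hVs⟩
        rw [← hVs]
        exact mem_image_of_mem V (mem_univ s)
      · refine le_trans h ?_
        apply sum_le_sum_of_subset_of_nonneg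
        · intro s hs
          rw [mem_filter] at hs ⊢
          exact ⟨hs.1, le_max' _ _ (mem_image_of_mem V (mem_filter.mpr ⟨hs.1, hs.2⟩))⟩
        · intro s _ _; exact hp s
    have := min'_le T y hyT
    rw [← hx₀def] at this
    linarith
  have hBAc : B = A + c := by
    rw [hBdef, hAdef, hcdef]
    rw [← sum_filter_add_sum_filter_not (univ.filter (fun s => V s ≤ x₀))
        (fun s => V s < x₀) p]
    congr 1
    · congr 1
      ext s
      simp only [mem_filter, mem_univ, true_and]
      constructor
      · rintro ⟨_, h2⟩; exact h2
      · intro h; exact ⟨le_of_lt h, h⟩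
    · congr 1
      ext s
      simp only [mem_filter, mem_univ, true_and]
      constructor
      · rintro ⟨h1, h2⟩; exact le_antisymm h1 (not_lt.mp h2)
      · intro h; exact ⟨le_of_eq h, by rw [h]; exact lt_irrefl _⟩
  set r : ℝ := α - A with hrdef
  have hr : 0 < r := by rw [hrdef]; linarith
  have hrc : r ≤ c := by rw [hrdef]; linarith
  have hc : 0 < c := lt_of_lt_of_le hr hrc
  set μ : S → ℝ := fun s =>
    if V s < x₀ then p s else if V s = x₀ then p s * (r / c) else 0 with hμdef
  have hrc1 : r / c ≤ 1 := (div_le_one hc).mpr hrc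
  have hrc0 : 0 ≤ r / c := le_of_lt (div_pos hr hc)
  have hbounds : ∀ s, 0 ≤ μ s ∧ μ s ≤ p s := by
    intro s
    rw [hμdef]
    dsimp only
    split_ifs with h1 h2
    · exact ⟨hp s, le_refl _⟩
    · constructor
      · exact mul_nonneg (hp s) hrc0
      · calc p s * (r / c) ≤ p s * 1 := by
              apply mul_le_mul_of_nonneg_left hrc1 (hp s)
          _ = p s := mul_one _
    · exact ⟨le_refl _, hp s⟩
  -- pointwise decomposition of μ
  have hμpt : ∀ s, μ s = (if V s < x₀ then p s else 0)
      + (if V s = x₀ then p s * (r / c) else 0) := by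
    intro s
    rw [hμdef]
    dsimp only
    split_ifs with h1 h2
    · exfalso; rw [h2] at h1; exact lt_irrefl _ h1
    · ring
    · ring
    · ring
  have hsum_lt : ∀ (g : S → ℝ), ∑ s, (if V s < x₀ then g s else 0)
      = ∑ s ∈ univ.filter (fun s => V s < x₀), g s := by
    intro g; rw [sum_filter]
  have hsum_eq : ∀ (g : S → ℝ), ∑ s, (if V s = x₀ then g s else 0)
      = ∑ s ∈ univ.filter (fun s => V s = x₀), g s := by
    intro g; rw [sum_filter]
  have hμsum : ∑ s, μ s = α := by
    calc ∑ s, μ s = ∑ s, ((if V s < x₀ then p s else 0)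
        + (if V s = x₀ then p s * (r / c) else 0)) := by
          apply sum_congr rfl; intro s _; exact hμpt s
      _ = A + (∑ s ∈ univ.filter (fun s => V s = x₀), p s) * (r / c) := by
          rw [sum_add_distrib, hsum_lt, hsum_eq]
          rw [hAdef, ← sum_mul]
      _ = α := by rw [← hcdef]; field_simp; rw [hrdef]; ring
  -- value of sum μ V
  have hVeq : ∑ s ∈ univ.filter (fun s => V s = x₀), p s * V s = c * x₀ := by
    rw [hcdef, sum_mul]
    apply sum_congr rfl
    intro s hs
    rw [(mem_filter.mp hs).2]
  have hμV : ∑ s, μ s * V s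
      = (∑ s ∈ univ.filter (fun s => V s < x₀), p s * V s) + r * x₀ := by
    calc ∑ s, μ s * V s
        = ∑ s, ((if V s < x₀ then p s * V s else 0)
          + (if V s = x₀ then p s * (r / c) * V s else 0)) := by
          apply sum_congr rfl; intro s _
          rw [hμpt s, add_mul]
          congr 1 <;> split_ifs <;> ring
      _ = (∑ s ∈ univ.filter (fun s => V s < x₀), p s * V s)
          + ∑ s ∈ univ.filter (fun s => V s = x₀), p s * (r / c) * V s := by
          rw [sum_add_distrib, hsum_lt, hsum_eq]
      _ = (∑ s ∈ univ.filter (fun s => V s < x₀), p s * V s) + r * x₀ := by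
          congr 1
          have : ∑ s ∈ univ.filter (fun s => V s = x₀), p s * (r / c) * V s
              = (r / c) * ∑ s ∈ univ.filter (fun s => V s = x₀), p s * V s := by
            rw [mul_sum]; apply sum_congr rfl; intro s _; ring
          rw [this, hVeq]
          field_simp
  -- the objective function
  set f : ℝ → ℝ := fun x => x - (1 / α) * ∑ s, p s * max (x - V s) 0 with hfdef
  have hmax_lt : ∑ s, p s * max (x₀ - V s) 0
      = ∑ s ∈ univ.filter (fun s => V s < x₀), p s * (x₀ - V s) := by
    rw [← hsum_lt (fun s => p s * (x₀ - V s))]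
    apply sum_congr rfl
    intro s _
    split_ifs with h
    · rw [max_eq_left (by linarith)]
    · rw [max_eq_right (by push_neg at h; linarith)]
      ring
  have hub : ∀ x, f x ≤ f x₀ := by
    intro x
    rcases le_total x x₀ with hx | hx
    · -- x ≤ x₀
      have key : ∑ s, p s * max (x₀ - V s) 0 - ∑ s, p s * max (x - V s) 0
          ≤ α * (x₀ - x) := by
        rw [← sum_sub_distrib]
        have step : ∀ s ∈ univ, p s * max (x₀ - V s) 0 - p s * max (x - V s) 0
            ≤ (if V s < x₀ then p s * (x₀ - x) else 0) := by
          intro s _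
          split_ifs with h
          · rw [← mul_sub]
            apply mul_le_mul_of_nonneg_left _ (hp s)
            have h1 : max (x₀ - V s) 0 - max (x - V s) 0 ≤ (x₀ - V s) - (x - V s) := by
              rcases le_or_gt (x - V s) 0 with h2 | h2
              · rw [max_eq_right h2, max_eq_left (by linarith : (0:ℝ) ≤ x₀ - V s)]
                linarith
              · rw [max_eq_left (le_of_lt h2), max_eq_left (by linarith)]
            linarith [h1]
          · push_neg at h
            have h1 : max (x₀ - V s) 0 = 0 := max_eq_right (by linarith)
            have h2 : max (x - V s) 0 = 0 := max_eq_right (by linarith)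
            rw [h1, h2]
            simp
        calc ∑ s, (p s * max (x₀ - V s) 0 - p s * max (x - V s) 0)
            ≤ ∑ s, (if V s < x₀ then p s * (x₀ - x) else 0) := sum_le_sum step
          _ = ∑ s ∈ univ.filter (fun s => V s < x₀), p s * (x₀ - x) := hsum_lt _
          _ = A * (x₀ - x) := by rw [hAdef, sum_mul]
          _ ≤ α * (x₀ - x) := by
              apply mul_le_mul_of_nonneg_right (le_of_lt hA) (by linarith)
      rw [hfdef]
      dsimp only
      have h1 := mul_le_mul_of_nonneg_left key (le_of_lt (one_div_pos.mpr hα))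
      have h2 : (1 / α) * (α * (x₀ - x)) = x₀ - x := by field_simp
      rw [mul_sub] at h1
      linarith
    · -- x₀ ≤ x
      have key : α * (x - x₀) ≤ ∑ s, p s * max (x - V s) 0 - ∑ s, p s * max (x₀ - V s) 0 := by
        rw [← sum_sub_distrib]
        have step : ∀ s ∈ univ, (if V s ≤ x₀ then p s * (x - x₀) else 0)
            ≤ p s * max (x - V s) 0 - p s * max (x₀ - V s) 0 := by
          intro s _
          split_ifs with h
          · rw [max_eq_left (by linarith), max_eq_left (by linarith)]
            rw [← mul_sub]
            apply mul_le_mul_of_nonneg_left _ (hp s)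
            linarith
          · have : p s * max (x₀ - V s) 0 ≤ p s * max (x - V s) 0 := by
              apply mul_le_mul_of_nonneg_left _ (hp s)
              apply max_le_max _ (le_refl 0)
              linarith
            linarith
        calc α * (x - x₀) ≤ B * (x - x₀) := by
              apply mul_le_mul_of_nonneg_right hB (by linarith)
          _ = ∑ s ∈ univ.filter (fun s => V s ≤ x₀), p s * (x - x₀) := by
              rw [hBdef, sum_mul]
          _ = ∑ s, (if V s ≤ x₀ then p s * (x - x₀) else 0) := sum_filter _ _
          _ ≤ ∑ s, (p s * max (x - V s) 0 - p s * max (x₀ - V s) 0) := sum_le_sum step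
      rw [hfdef]
      dsimp only
      have h1 := mul_le_mul_of_nonneg_left key (le_of_lt (one_div_pos.mpr hα))
      have h2 : (1 / α) * (α * (x - x₀)) = x - x₀ := by field_simp
      rw [mul_sub] at h1
      linarith
  have hbdd : BddAbove (Set.range f) := by
    refine ⟨f x₀, ?_⟩
    rintro _ ⟨x, rfl⟩
    exact hub x
  have hcvar : cvar α p V = f x₀ := by
    rw [cvar]
    exact le_antisymm (ciSup_le hub) (le_ciSup hbdd x₀)
  refine ⟨μ, hbounds, hμsum, ?_, ?_⟩
  · rw [hcvar, hμV, hfdef]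
    dsimp only
    rw [hmax_lt]
    have hAx : ∑ s ∈ univ.filter (fun s => V s < x₀), p s * (x₀ - V s)
        = A * x₀ - ∑ s ∈ univ.filter (fun s => V s < x₀), p s * V s := by
      rw [hAdef, sum_mul, ← sum_sub_distrib]
      apply sum_congr rfl
      intro s _; ring
    rw [hAx]
    field_simp
    rw [hrdef]
    ring
  · intro s s' hs hs'
    have hVs : V s ≤ x₀ := by
      by_contra h
      push_neg at h
      have : μ s = 0 := by
        rw [hμdef]
        dsimp only
        rw [if_neg (by linarith), if_neg (by linarith)]
      rw [this] at hs; exact lt_irrefl _ hs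
    have hVs' : x₀ ≤ V s' := by
      by_contra h
      push_neg at h
      have : μ s' = p s' := by
        rw [hμdef]; dsimp only; rw [if_pos h]
      rw [this] at hs'; exact lt_irrefl _ hs'
    linarith
end

section
/- CVaR gap due to value function shift: if V̄(s) ≥ V(s) for all s, then CVaR^α(V̄; p) − CVaR^α(V; p) ≤ ∑_s β^{α,V}(s) · (V̄(s) − V(s)), where β^{α,V} is the conditional distribution of p conditioned on the worst α-portion of values of V. -/
open Finset

theorem cvar_gap_of_value_shift {S : Type*} [Fintype S] [Nonempty S]
    (p V Vbar μ : S → ℝ) (α : ℝ) (hα : 0 < α) (hα1 : α ≤ 1)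
    (hp : ∀ s, 0 ≤ p s) (hp1 : ∑ s, p s = 1)
    (hVV : ∀ s, V s ≤ Vbar s)
    (hμ0 : ∀ s, 0 ≤ μ s) (hμp : ∀ s, μ s ≤ p s) (hμsum : ∑ s, μ s = α)
    (hμsupp : ∀ s s', 0 < μ s → μ s' < p s' → V s ≤ V s')
    (hμcvar : (1 / α) * ∑ s, μ s * V s = cvar α p V) :
    cvar α p Vbar - cvar α p V ≤ ∑ s, (μ s / α) * (Vbar s - V s) := by
  have hαinv : (0:ℝ) < 1/α := by positivity
  have hb : cvar α p Vbar ≤ (1/α) * ∑ s, μ s * Vbar s := by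
    apply ciSup_le
    intro x
    have h1 : ∑ s, μ s * max (x - Vbar s) 0 ≤ ∑ s, p s * max (x - Vbar s) 0 := by
      apply Finset.sum_le_sum
      intro s _
      exact mul_le_mul_of_nonneg_right (hμp s) (le_max_right _ _)
    have h2 : ∑ s, μ s * (x - Vbar s) ≤ ∑ s, μ s * max (x - Vbar s) 0 := by
      apply Finset.sum_le_sum
      intro s _
      exact mul_le_mul_of_nonneg_left (le_max_left _ _) (hμ0 s)
    have h3 : ∑ s, μ s * (x - Vbar s) = α * x - ∑ s, μ s * Vbar s := by
      simp [mul_sub, Finset.sum_sub_distrib, ← Finset.sum_mul, hμsum]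
    have h4 := mul_le_mul_of_nonneg_left (h2.trans h1) (le_of_lt hαinv)
    rw [h3] at h4
    have hx : (1/α) * (α * x - ∑ s, μ s * Vbar s)
        = x - (1/α) * ∑ s, μ s * Vbar s := by
      field_simp
    linarith [hx ▸ h4]
  have hsum : ∑ s, (μ s / α) * (Vbar s - V s)
      = (1/α) * ∑ s, μ s * Vbar s - (1/α) * ∑ s, μ s * V s := by
    rw [Finset.mul_sum, Finset.mul_sum, ← Finset.sum_sub_distrib]
    apply Finset.sum_congr rfl
    intro s _
    field_simp
  linarith [hμcvar, hb, hsum]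
end

section
/- ℓ1 stability of the CVaR distortion: for two probability mass functions p and p̂ on a finite type S, a fixed value function V, and α ∈ (0,1], the corresponding CVaR distortion weightings μ and μ̂ (supported on the worst α-portion of V under p and p̂ respectively) satisfy ∑_s |μ̂(s) − μ(s)| ≤ 2 · ∑_s |p̂(s) − p(s)|. -/
/-!
Write `P s` for the `p`-mass strictly before `s`. Then `distortion α p s` is the length of
`[P s, P s + p s] ∩ (-∞, α]`. Replacing `p̂ s` by `p s` in `distortion α p̂ s` costs at most
`|p̂ s - p s|`, and what remains is the length of the same interval cut at `α - (P̂ s - P s)`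
instead of `α`. Both cut points lie in `[L, R] = [α - E⁺, α + E⁻]`, where `E⁺`, `E⁻` are the
total positive and negative parts of `p̂ - p`, so the remaining error at `s` is at most the length
of `[P s, P s + p s] ∩ [L, R]`. These intervals are consecutive, so the errors add up to at most
`R - L = E⁺ + E⁻ = ∑ |p̂ - p|`.
-/

open Finset

/-- The CVaR distortion weighting of a distribution `q` at risk level `α`, for states sorted in
ascending order of value (the linear order on `S` is assumed to sort states by `V`):
full mass `q s` strictly below the `α`-quantile, residual mass at the quantile, and `0` above. -/
noncomputable def distortion {S : Type*} [Fintype S] [LinearOrder S]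
    (α : ℝ) (q : S → ℝ) (s : S) : ℝ :=
  min (q s) (max (α - ∑ t ∈ Finset.univ.filter (fun t => t < s), q t) 0)

lemma abs_min_sub_min_le_abs_sub {E : Type*} [AddCommGroup E] [LinearOrder E]
    [IsOrderedAddMonoid E] (a b x : E) : |min a x - min b x| ≤ |a - b| :=
  (abs_min_sub_min_le_max a x b x).trans (by simp)

/-- `min c (max (u - a) 0)` is the length of `[a, a + c] ∩ (-∞, u]`; moving the cut point `u`
within `[L, R]` changes it by at most the length of `[a, a + c] ∩ [L, R]`. -/
lemma abs_min_max_sub_min_max_le_clamp {a c u v L R : ℝ} (hc : 0 ≤ c)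
    (hLu : L ≤ u) (huR : u ≤ R) (hLv : L ≤ v) (hvR : v ≤ R) :
    |min c (max (u - a) 0) - min c (max (v - a) 0)| ≤
      min (max (a + c) L) R - min (max a L) R := by
  rw [abs_sub_le_iff]
  constructor <;> (simp only [min_def, max_def]; split_ifs <;> linarith)

lemma Finset.sum_le_sum_posPart {ι E : Type*} [Fintype ι] [AddCommGroup E] [Lattice E]
    [IsOrderedAddMonoid E] (A : Finset ι) (f : ι → E) :
    ∑ i ∈ A, f i ≤ ∑ i, (f i)⁺ :=
  (sum_le_sum fun i _ => le_posPart (f i)).trans <|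
    sum_le_sum_of_subset_of_nonneg (subset_univ A) fun i _ _ => posPart_nonneg (f i)

lemma Finset.neg_sum_le_sum_negPart {ι E : Type*} [Fintype ι] [AddCommGroup E] [Lattice E]
    [IsOrderedAddMonoid E] (A : Finset ι) (f : ι → E) :
    -∑ i ∈ A, f i ≤ ∑ i, (f i)⁻ := by
  simpa only [← sum_neg_distrib, posPart_neg] using A.sum_le_sum_posPart (fun i => -f i)

section PrefixSums

variable {S : Type*} [LinearOrder S]

lemma Finset.sum_sub_prefixSum_telescope {M G : Type*} [AddCommMonoid M] [AddCommGroup G]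
    (A : Finset S) (p : S → M) (g : M → G) :
    ∑ s ∈ A, (g ((∑ t ∈ A with t < s, p t) + p s) - g (∑ t ∈ A with t < s, p t)) =
      g (∑ t ∈ A, p t) - g 0 := by
  induction A using Finset.induction_on_max with
  | empty => simp
  | insert m A hm ih =>
    have hmA : m ∉ A := fun h => (hm m h).false
    have h_m : (insert m A).filter (· < m) = A := by
      rw [filter_insert, if_neg (lt_irrefl m), filter_true_of_mem hm]
    have h_A : ∀ s ∈ A, (insert m A).filter (· < s) = A.filter (· < s) := fun s hs => by
      rw [filter_insert, if_neg (hm s hs).not_gt]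
    have h_rest : ∑ s ∈ A, (g ((∑ t ∈ insert m A with t < s, p t) + p s)
        - g (∑ t ∈ insert m A with t < s, p t)) = g (∑ t ∈ A, p t) - g 0 :=
      (sum_congr rfl fun s hs => by rw [h_A s hs]).trans ih
    rw [sum_insert hmA, h_m, h_rest, sum_insert hmA, add_comm (p m)]
    abel

variable [Fintype S]

lemma abs_distortion_sub_le {α L R : ℝ} {p phat : S → ℝ}
    (hL : L ≤ α - ∑ t, (phat t - p t)⁺) (hR : α + ∑ t, (phat t - p t)⁻ ≤ R)
    {s : S} (hps : 0 ≤ p s) :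
    |distortion α phat s - distortion α p s| ≤ |phat s - p s| +
      (min (max ((∑ t with t < s, p t) + p s) L) R - min (max (∑ t with t < s, p t) L) R) := by
  set A := ∑ t with t < s, p t
  set B := ∑ t with t < s, phat t
  have hBA : B - A ≤ ∑ t, (phat t - p t)⁺ := by
    rw [← sum_sub_distrib]
    exact sum_le_sum_posPart _ _
  have hAB : A - B ≤ ∑ t, (phat t - p t)⁻ := by
    rw [← neg_sub, ← sum_sub_distrib]
    exact neg_sum_le_sum_negPart _ _
  have hEpos := sum_nonneg fun t (_ : t ∈ univ) => posPart_nonneg (phat t - p t)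
  have hEneg := sum_nonneg fun t (_ : t ∈ univ) => negPart_nonneg (phat t - p t)
  calc |distortion α phat s - distortion α p s|
      ≤ |min (phat s) (max (α - B) 0) - min (p s) (max (α - B) 0)| +
          |min (p s) (max (α - B) 0) - min (p s) (max (α - A) 0)| :=
        abs_sub_le _ _ _
    _ ≤ _ := by
      refine add_le_add (abs_min_sub_min_le_abs_sub _ _ _) ?_
      rw [show α - B = α - (B - A) - A by ring]
      exact abs_min_max_sub_min_max_le_clamp hps (by linarith) (by linarith) (by linarith)
        (by linarith)

end PrefixSums

theorem distortion_l1_stability_general {S : Type*} [Fintype S] [LinearOrder S]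
    (p phat : S → ℝ) (α : ℝ)
    (hp : ∀ s, 0 ≤ p s) :
    ∑ s, |distortion α phat s - distortion α p s| ≤ 2 * ∑ s, |phat s - p s| := by
  set Epos := ∑ t, (phat t - p t)⁺
  set Eneg := ∑ t, (phat t - p t)⁻
  set g : ℝ → ℝ := fun x => min (max x (α - Epos)) (α + Eneg)
  have hE : Epos + Eneg = ∑ s, |phat s - p s| := by
    simp only [Epos, Eneg, ← sum_add_distrib, posPart_add_negPart]
  have hLR : α - Epos ≤ α + Eneg := by
    linarith [sum_nonneg fun t (_ : t ∈ univ) => posPart_nonneg (phat t - p t),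
      sum_nonneg fun t (_ : t ∈ univ) => negPart_nonneg (phat t - p t)]
  have hg_le : ∀ x, g x ≤ α + Eneg := fun x => min_le_right _ _
  have hg_ge : ∀ x, α - Epos ≤ g x := fun x => le_min (le_max_right _ _) hLR
  calc ∑ s, |distortion α phat s - distortion α p s|
      ≤ ∑ s, (|phat s - p s| +
          (g ((∑ t with t < s, p t) + p s) - g (∑ t with t < s, p t))) :=
        sum_le_sum fun s _ => abs_distortion_sub_le le_rfl le_rfl (hp s)
    _ = ∑ s, |phat s - p s| + (g (∑ s, p s) - g 0) := by
        rw [sum_add_distrib, sum_sub_prefixSum_telescope]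
    _ ≤ 2 * ∑ s, |phat s - p s| := by linarith [hg_le (∑ s, p s), hg_ge 0]

theorem distortion_l1_stability {S : Type*} [Fintype S] [LinearOrder S] [Nonempty S]
    (p phat V : S → ℝ) (α : ℝ) (hα : 0 < α) (hα1 : α ≤ 1)
    (hp : ∀ s, 0 ≤ p s) (hp1 : ∑ s, p s = 1)
    (hphat : ∀ s, 0 ≤ phat s) (hphat1 : ∑ s, phat s = 1)
    (hV : Monotone V) :
    ∑ s, |distortion α phat s - distortion α p s| ≤ 2 * ∑ s, |phat s - p s| :=
  distortion_l1_stability_general p phat α hp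
end

section
/- CVaR perturbation bound via ℓ1 distance: for probability mass functions p, p̂ on a finite type S, V : S → [0, H], and α ∈ (0,1], |CVaR^α(V; p̂) − CVaR^α(V; p)| ≤ (2H/α) · ∑_s |p̂(s) − p(s)|. -/
open Finset

theorem cvar_l1_perturbation {S : Type*} [Fintype S] [Nonempty S]
    (p phat V : S → ℝ) (H : ℝ) (hH : 0 < H)
    (α : ℝ) (hα : 0 < α) (hα1 : α ≤ 1)
    (hp : ∀ s, 0 ≤ p s) (hp1 : ∑ s, p s = 1)
    (hphat : ∀ s, 0 ≤ phat s) (hphat1 : ∑ s, phat s = 1)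
    (hV0 : ∀ s, 0 ≤ V s) (hVH : ∀ s, V s ≤ H) :
    |cvar α phat V - cvar α p V| ≤ (2 * H / α) * ∑ s, |phat s - p s| := by
  set D := ∑ s, |phat s - p s| with hDdef
  have hDnn : 0 ≤ D := Finset.sum_nonneg fun s _ => abs_nonneg _
  have hαinv : (0:ℝ) < 1 / α := by positivity
  have hαinv1 : (1:ℝ) ≤ 1 / α := by
    rw [le_div_iff₀ hα]; linarith
  set c := (H / α) * D with hcdef
  set f : (S → ℝ) → ℝ → ℝ := fun q x => x - (1 / α) * ∑ s, q s * max (x - V s) 0 with hf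
  -- general facts for pmfs
  have hsum_nonneg : ∀ (q : S → ℝ), (∀ s, 0 ≤ q s) → ∀ x,
      0 ≤ ∑ s, q s * max (x - V s) 0 := by
    intro q hq x
    exact Finset.sum_nonneg fun s _ => mul_nonneg (hq s) (le_max_right _ _)
  have hmono : ∀ (q : S → ℝ), (∀ s, 0 ≤ q s) → (∑ s, q s = 1) → ∀ x,
      f q x ≤ f q (min (max x 0) H) := by
    intro q hq hq1 x
    rcases le_or_gt x 0 with hx0 | hx0
    · have hmin : min (max x 0) H = 0 := by
        rw [max_eq_right hx0]; exact min_eq_left hH.le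
      rw [hmin]
      have h1 : ∀ s, q s * max (x - V s) 0 = 0 := by
        intro s
        have : x - V s ≤ 0 := by have := hV0 s; linarith
        rw [max_eq_right this, mul_zero]
      have h2 : ∀ s, q s * max (0 - V s) 0 = 0 := by
        intro s
        have : (0:ℝ) - V s ≤ 0 := by have := hV0 s; linarith
        rw [max_eq_right this, mul_zero]
      simp only [hf, Finset.sum_congr rfl (fun s _ => h1 s),
        Finset.sum_congr rfl (fun s _ => h2 s), Finset.sum_const_zero, mul_zero, sub_zero]
      linarith
    · rcases le_or_gt x H with hxH | hxH
      · have hmin : min (max x 0) H = x := by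
          rw [max_eq_left hx0.le]; exact min_eq_left hxH
        rw [hmin]
      · have hmin : min (max x 0) H = H := by
          rw [max_eq_left hx0.le]; exact min_eq_right hxH.le
        rw [hmin]
        have hxform : ∀ y : ℝ, H ≤ y → f q y = y * (1 - 1/α) + (1/α) * ∑ s, q s * V s := by
          intro y hy
          have h1 : ∀ s, q s * max (y - V s) 0 = q s * (y - V s) := by
            intro s
            have : 0 ≤ y - V s := by have := hVH s; linarith
            rw [max_eq_left this]
          simp only [hf]
          rw [Finset.sum_congr rfl (fun s _ => h1 s)]
          have : ∑ s, q s * (y - V s) = y - ∑ s, q s * V s := by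
            simp only [mul_sub]
            rw [Finset.sum_sub_distrib, ← Finset.sum_mul, hq1, one_mul]
          rw [this]; ring
        rw [hxform x hxH.le, hxform H le_rfl]
        have : x * (1 - 1/α) ≤ H * (1 - 1/α) := by
          apply mul_le_mul_of_nonpos_right hxH.le; linarith
        linarith
  have hbdd : ∀ (q : S → ℝ), (∀ s, 0 ≤ q s) → (∑ s, q s = 1) →
      BddAbove (Set.range (f q)) := by
    intro q hq hq1
    refine ⟨H, ?_⟩
    rintro _ ⟨x, rfl⟩
    have h1 := hmono q hq hq1 x
    have h2 : f q (min (max x 0) H) ≤ min (max x 0) H := by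
      have := hsum_nonneg q hq (min (max x 0) H)
      simp only [hf]
      nlinarith
    have h3 : min (max x 0) H ≤ H := min_le_right _ _
    linarith
  have key : ∀ (q r : S → ℝ), (∀ s, 0 ≤ q s) → (∑ s, q s = 1) →
      (∀ s, 0 ≤ r s) → (∑ s, r s = 1) →
      (∑ s, |r s - q s|) ≤ D →
      cvar α q V ≤ cvar α r V + c := by
    intro q r hq hq1 hr hr1 hd
    have hdiff : ∀ x, 0 ≤ x → x ≤ H → f q x ≤ f r x + c := by
      intro x hx0 hxH
      have heq : f q x - f r x = (1/α) * ∑ s, (r s - q s) * max (x - V s) 0 := by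
        simp only [hf]
        have h := Finset.sum_congr rfl (fun s (_ : s ∈ Finset.univ) =>
          (sub_mul (r s) (q s) (max (x - V s) 0)))
        rw [h, Finset.sum_sub_distrib]
        ring
      have hbound : ∑ s, (r s - q s) * max (x - V s) 0 ≤ H * D := by
        calc ∑ s, (r s - q s) * max (x - V s) 0
            ≤ ∑ s, |r s - q s| * H := by
              apply Finset.sum_le_sum
              intro s _
              have hm0 : 0 ≤ max (x - V s) 0 := le_max_right _ _
              have hmH : max (x - V s) 0 ≤ H := by
                apply max_le _ hH.le
                have := hV0 s; linarith
              calc (r s - q s) * max (x - V s) 0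
                  ≤ |r s - q s| * max (x - V s) 0 :=
                    mul_le_mul_of_nonneg_right (le_abs_self _) hm0
                _ ≤ |r s - q s| * H :=
                    mul_le_mul_of_nonneg_left hmH (abs_nonneg _)
          _ = H * ∑ s, |r s - q s| := by rw [← Finset.sum_mul]; ring
          _ ≤ H * D := by apply mul_le_mul_of_nonneg_left hd hH.le
      have : f q x - f r x ≤ c := by
        rw [heq, hcdef]
        calc (1/α) * ∑ s, (r s - q s) * max (x - V s) 0
            ≤ (1/α) * (H * D) := by
              apply mul_le_mul_of_nonneg_left hbound hαinv.le
          _ = (H / α) * D := by ring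
      linarith
    show (⨆ x, f q x) ≤ (⨆ x, f r x) + c
    apply ciSup_le
    intro x
    set y := min (max x 0) H with hy
    have hy0 : 0 ≤ y := le_min (le_max_right _ _) hH.le
    have hyH : y ≤ H := min_le_right _ _
    calc f q x ≤ f q y := hmono q hq hq1 x
      _ ≤ f r y + c := hdiff y hy0 hyH
      _ ≤ (⨆ x, f r x) + c := by
          have := le_ciSup (hbdd r hr hr1) y
          linarith
  have hd1 : ∑ s, |p s - phat s| ≤ D := by
    rw [hDdef]
    apply le_of_eq
    exact Finset.sum_congr rfl fun s _ => abs_sub_comm _ _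
  have h1 := key phat p hphat hphat1 hp hp1 hd1
  have h2 := key p phat hp hp1 hphat hphat1 (le_refl D)
  have hcle : 2 * c = (2 * H / α) * D := by rw [hcdef]; ring
  have hcnn : 0 ≤ c := mul_nonneg (by positivity) hDnn
  rw [abs_le]
  constructor <;> nlinarith
end

section
/- Conditional transition probability ℓ1 stability: for probability mass functions p, p̂ on a finite type S, a value function V, and α ∈ (0,1], the conditional (CVaR-distorted) distributions β := μ_p/α and β̂ := μ_{p̂}/α satisfy ∑_s |β̂(s) − β(s)| ≤ (2/α) · ∑_s |p̂(s) − p(s)|. -/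
open Finset

section Aux

variable {S : Type*} [Fintype S] [LinearOrder S]

lemma distortion_nonneg (α : ℝ) (q : S → ℝ) (hq : ∀ s, 0 ≤ q s) (s : S) :
    0 ≤ distortion α q s :=
  le_min (hq s) (le_max_right _ _)

lemma distortion_le (α : ℝ) (q : S → ℝ) (s : S) : distortion α q s ≤ q s :=
  min_le_left _ _

lemma sum_distortion (α : ℝ) (hα : 0 ≤ α) (q : S → ℝ) (hq : ∀ s, 0 ≤ q s)
    (T : Finset S) (hT : ∀ a ∈ T, ∀ b, b ≤ a → b ∈ T) :
    ∑ t ∈ T, distortion α q t = min (∑ t ∈ T, q t) α := by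
  classical
  revert hT
  refine Finset.induction_on_max T ?_ ?_
  · intro _
    simp [min_eq_left hα]
  · intro a s h ih hT
    have hs_dc : ∀ x ∈ s, ∀ b, b ≤ x → b ∈ s := by
      intro x hx b hb
      have hba : b < a := lt_of_le_of_lt hb (h x hx)
      have hmem : b ∈ insert a s := hT x (mem_insert_of_mem hx) b hb
      rcases mem_insert.mp hmem with h' | h'
      · exact absurd h' (ne_of_lt hba)
      · exact h'
    have hfilter : Finset.univ.filter (fun t => t < a) = s := by
      ext x
      simp only [mem_filter, mem_univ, true_and]
      constructor
      · intro hx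
        have hmem : x ∈ insert a s := hT a (mem_insert_self a s) x (le_of_lt hx)
        rcases mem_insert.mp hmem with h' | h'
        · exact absurd h' (ne_of_lt hx)
        · exact h'
      · intro hx; exact h x hx
    have ha : a ∉ s := fun ha => lt_irrefl a (h a ha)
    rw [Finset.sum_insert ha, Finset.sum_insert ha, ih hs_dc]
    unfold distortion
    rw [hfilter]
    have hF0 : 0 ≤ ∑ t ∈ s, q t := Finset.sum_nonneg fun t _ => hq t
    set F := ∑ t ∈ s, q t with hF
    rcases le_total α F with hc | hc
    · rw [max_eq_right (show α - F ≤ 0 by linarith), min_eq_right hc,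
        min_eq_right (show α ≤ q a + F by linarith [hq a]), min_eq_right (hq a)]
      ring
    · rw [max_eq_left (by linarith), min_eq_left hc]
      rcases le_total (q a) (α - F) with hd | hd
      · rw [min_eq_left hd, min_eq_left (by linarith)]
      · rw [min_eq_right hd, min_eq_right (by linarith)]
        ring

lemma max_add_max_neg (x : ℝ) : max x 0 + max (-x) 0 = |x| := by
  rcases le_total 0 x with h | h
  · rw [max_eq_left h, max_eq_right (neg_nonpos.mpr h), add_zero, abs_of_nonneg h]
  · rw [max_eq_right h, max_eq_left (neg_nonneg.mpr h), zero_add, abs_of_nonpos h]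

lemma oneSided (α : ℝ) (hα : 0 < α) (q qh : S → ℝ)
    (hq : ∀ s, 0 ≤ q s) (hqh : ∀ s, 0 ≤ qh s) :
    ∑ s, max (distortion α qh s - distortion α q s) 0 ≤ ∑ s, |qh s - q s| := by
  classical
  set A := Finset.univ.filter
      (fun s => distortion α q s < q s ∧ distortion α q s < distortion α qh s) with hA
  rcases A.eq_empty_or_nonempty with hAe | hAne
  · refine Finset.sum_le_sum fun s _ => ?_
    rcases le_or_gt (distortion α qh s) (distortion α q s) with h | h
    · calc max (distortion α qh s - distortion α q s) 0 = 0 := max_eq_right (by linarith)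
        _ ≤ _ := abs_nonneg _
    · have hs : s ∉ A := by rw [hAe]; exact notMem_empty s
      have hnot : ¬ (distortion α q s < q s) := by
        intro hlt
        exact hs (by rw [hA]; exact mem_filter.mpr ⟨mem_univ s, hlt, h⟩)
      have hdq : distortion α q s = q s :=
        le_antisymm (distortion_le _ _ _) (le_of_not_gt hnot)
      have hle : distortion α qh s - distortion α q s ≤ qh s - q s := by
        have := distortion_le α qh s
        linarith
      calc max (distortion α qh s - distortion α q s) 0
          ≤ max (qh s - q s) 0 := max_le_max hle le_rfl
        _ ≤ |qh s - q s| := max_le (le_abs_self _) (abs_nonneg _)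
  · set s0 := A.min' hAne with hs0
    have hs0A : s0 ∈ A := A.min'_mem hAne
    obtain ⟨-, hd1, hd2⟩ := mem_filter.mp hs0A
    set F := ∑ t ∈ Finset.univ.filter (fun t => t < s0), q t with hF
    set Fh := ∑ t ∈ Finset.univ.filter (fun t => t < s0), qh t with hFh
    -- distortion α q s0 = max (α - F) 0
    have hds0 : distortion α q s0 = max (α - F) 0 := by
      unfold distortion at hd1 ⊢
      rcases le_total (q s0) (max (α - F) 0) with h | h
      · rw [min_eq_left h] at hd1; exact absurd hd1 (lt_irrefl _)
      · rw [min_eq_right h]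
    -- Fh < α
    have hFha : Fh < α := by
      have h0 : 0 < distortion α qh s0 :=
        lt_of_le_of_lt (distortion_nonneg α q hq s0) hd2
      have hle : distortion α qh s0 ≤ max (α - Fh) 0 := min_le_right _ _
      have : 0 < max (α - Fh) 0 := lt_of_lt_of_le h0 hle
      rcases lt_max_iff.mp this with h' | h'
      · linarith
      · exact absurd h' (lt_irrefl 0)
    have hdc : ∀ a ∈ Finset.univ.filter (fun t => t < s0), ∀ b, b ≤ a →
        b ∈ Finset.univ.filter (fun t => t < s0) := by
      intro a hamem b hb
      simp only [mem_filter, mem_univ, true_and] at hamem ⊢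
      exact lt_of_le_of_lt hb hamem
    -- sum of dh over lower part
    have hsum_low : ∑ t ∈ Finset.univ.filter (fun t => t < s0), distortion α qh t = Fh := by
      rw [sum_distortion α hα.le qh hqh _ hdc, ← hFh, min_eq_left hFha.le]
    have hsum_all : ∑ t, distortion α qh t ≤ α := by
      rw [sum_distortion α hα.le qh hqh Finset.univ (fun a _ b _ => mem_univ b)]
      exact min_le_right _ _
    -- split
    have hsplit := Finset.sum_filter_add_sum_filter_not Finset.univ (fun s => s < s0)
      (fun s => max (distortion α qh s - distortion α q s) 0)
    -- bound on lower part
    have hlow : ∑ s ∈ Finset.univ.filter (fun s => s < s0),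
        max (distortion α qh s - distortion α q s) 0
        ≤ ∑ s ∈ Finset.univ.filter (fun s => s < s0), max (qh s - q s) 0 := by
      refine Finset.sum_le_sum fun s hsmem => ?_
      simp only [mem_filter, mem_univ, true_and] at hsmem
      rcases le_or_gt (distortion α qh s) (distortion α q s) with h | h
      · calc max (distortion α qh s - distortion α q s) 0 = 0 := max_eq_right (by linarith)
          _ ≤ max (qh s - q s) 0 := le_max_right _ _
      · have hsA : s ∉ A := by
          intro hmem
          exact absurd (A.min'_le s hmem) (not_le.mpr hsmem)
        have hnot : ¬ (distortion α q s < q s) := by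
          intro hlt
          exact hsA (by rw [hA]; exact mem_filter.mpr ⟨mem_univ s, hlt, h⟩)
        have hdq : distortion α q s = q s :=
          le_antisymm (distortion_le _ _ _) (le_of_not_gt hnot)
        have hle : distortion α qh s - distortion α q s ≤ qh s - q s := by
          have := distortion_le α qh s
          linarith
        exact max_le_max hle le_rfl
    -- bound on the tail
    set T2 := Finset.univ.filter (fun s => ¬ s < s0) with hT2
    have hs0T2 : s0 ∈ T2 := by
      rw [hT2]; exact mem_filter.mpr ⟨mem_univ _, lt_irrefl s0⟩
    have htail : ∑ s ∈ T2, max (distortion α qh s - distortion α q s) 0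
        ≤ ∑ s ∈ Finset.univ.filter (fun s => s < s0), max (q s - qh s) 0 := by
      have h1 : ∑ s ∈ T2, max (distortion α qh s - distortion α q s) 0
          = max (distortion α qh s0 - distortion α q s0) 0
            + ∑ s ∈ T2.erase s0, max (distortion α qh s - distortion α q s) 0 :=
        (Finset.add_sum_erase T2 _ hs0T2).symm
      have h2 : ∑ s ∈ T2.erase s0, max (distortion α qh s - distortion α q s) 0
          ≤ ∑ s ∈ T2.erase s0, distortion α qh s := by
        refine Finset.sum_le_sum fun s _ => ?_
        have := distortion_nonneg α q hq s
        have := distortion_nonneg α qh hqh s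
        exact max_le (by linarith) (by linarith)
      have h3 : max (distortion α qh s0 - distortion α q s0) 0
          = distortion α qh s0 - distortion α q s0 := max_eq_left (by linarith)
      have h4 : distortion α qh s0 + ∑ s ∈ T2.erase s0, distortion α qh s
          = ∑ s ∈ T2, distortion α qh s := Finset.add_sum_erase T2 _ hs0T2
      have h5 : ∑ s ∈ T2, distortion α qh s = ∑ t, distortion α qh t - Fh := by
        have := Finset.sum_filter_add_sum_filter_not Finset.univ (fun s => s < s0)
          (fun s => distortion α qh s)
        rw [hsum_low] at this
        rw [hT2]
        linarith
      have h6 : α - F ≤ distortion α q s0 := by rw [hds0]; exact le_max_left _ _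
      have h7 : ∑ s ∈ T2, max (distortion α qh s - distortion α q s) 0 ≤ F - Fh := by
        rw [h1, h3]
        linarith [h2, h4, h5, hsum_all, h6]
      have h8 : F - Fh ≤ ∑ s ∈ Finset.univ.filter (fun s => s < s0), max (q s - qh s) 0 := by
        rw [hF, hFh, ← Finset.sum_sub_distrib]
        exact Finset.sum_le_sum fun s _ => le_max_left _ _
      linarith
    -- combine
    have hcomb : ∑ s ∈ Finset.univ.filter (fun s => s < s0), max (qh s - q s) 0
        + ∑ s ∈ Finset.univ.filter (fun s => s < s0), max (q s - qh s) 0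
        = ∑ s ∈ Finset.univ.filter (fun s => s < s0), |qh s - q s| := by
      rw [← Finset.sum_add_distrib]
      refine Finset.sum_congr rfl fun s _ => ?_
      have := max_add_max_neg (qh s - q s)
      rw [neg_sub] at this
      exact this
    have hfinal : ∑ s ∈ Finset.univ.filter (fun s => s < s0), |qh s - q s|
        ≤ ∑ s, |qh s - q s| :=
      Finset.sum_le_sum_of_subset_of_nonneg (Finset.filter_subset _ _)
        (fun s _ _ => abs_nonneg _)
    calc ∑ s, max (distortion α qh s - distortion α q s) 0
        = ∑ s ∈ Finset.univ.filter (fun s => s < s0),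
            max (distortion α qh s - distortion α q s) 0
          + ∑ s ∈ T2, max (distortion α qh s - distortion α q s) 0 := by
          rw [hT2]; exact hsplit.symm
      _ ≤ ∑ s ∈ Finset.univ.filter (fun s => s < s0), max (qh s - q s) 0
          + ∑ s ∈ Finset.univ.filter (fun s => s < s0), max (q s - qh s) 0 :=
          add_le_add hlow htail
      _ = ∑ s ∈ Finset.univ.filter (fun s => s < s0), |qh s - q s| := hcomb
      _ ≤ ∑ s, |qh s - q s| := hfinal

end Aux

theorem conditional_transition_l1_stability {S : Type*} [Fintype S] [LinearOrder S] [Nonempty S]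
    (p phat V : S → ℝ) (α : ℝ) (hα : 0 < α) (hα1 : α ≤ 1)
    (hp : ∀ s, 0 ≤ p s) (hp1 : ∑ s, p s = 1)
    (hphat : ∀ s, 0 ≤ phat s) (hphat1 : ∑ s, phat s = 1)
    (hV : Monotone V) :
    ∑ s, |distortion α phat s / α - distortion α p s / α| ≤
      (2 / α) * ∑ s, |phat s - p s| := by
  have h1 := oneSided α hα p phat hp hphat
  have h2 := oneSided α hα phat p hphat hp
  have key : ∑ s, |distortion α phat s - distortion α p s| ≤ 2 * ∑ s, |phat s - p s| := by
    have habs : ∑ s, |distortion α phat s - distortion α p s|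
        = ∑ s, max (distortion α phat s - distortion α p s) 0
          + ∑ s, max (distortion α p s - distortion α phat s) 0 := by
      rw [← Finset.sum_add_distrib]
      refine Finset.sum_congr rfl fun s _ => ?_
      have := max_add_max_neg (distortion α phat s - distortion α p s)
      rw [neg_sub] at this
      exact this.symm
    have h2' : ∑ s, |p s - phat s| = ∑ s, |phat s - p s| :=
      Finset.sum_congr rfl fun s _ => abs_sub_comm _ _
    rw [habs]
    rw [h2'] at h2
    linarith
  have hstep : ∑ s, |distortion α phat s / α - distortion α p s / α|
      = (∑ s, |distortion α phat s - distortion α p s|) / α := by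
    rw [Finset.sum_div]
    refine Finset.sum_congr rfl fun s _ => ?_
    rw [div_sub_div_same, abs_div, abs_of_pos hα]
  rw [hstep]
  rw [div_le_iff₀ hα]
  calc ∑ s, |distortion α phat s - distortion α p s| ≤ 2 * ∑ s, |phat s - p s| := key
    _ = 2 / α * (∑ s, |phat s - p s|) * α := by field_simp
end

section
/- The iterated-CVaR Bellman optimality operator admits a Markovian greedy optimal policy: for finite state and action spaces, defining V*_{H+1} ≡ 0 and backwards Q*_h(s,a) = r(s,a) + CVaR^α over p(·|s,a) of V*_{h+1}, V*_h(s) = max_a Q*_h(s,a), the deterministic policy π*_h(s) := argmax_a Q*_h(s,a) satisfies V^{π*}_h(s) = V*_h(s) for all h and s, where V^π is defined by the iterated-CVaR policy evaluation recursion. -/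
open Finset

/-- Optimal iterated-CVaR value with `n` steps remaining:
`V*_0 ≡ 0`, `V*_{n+1}(s) = max_a (r(s,a) + CVaR^α(V*_n; p(·|s,a)))`. -/
noncomputable def Vstar {S A : Type*} [Fintype S]
    (r : S → A → ℝ) (p : S → A → S → ℝ) (α : ℝ) : ℕ → S → ℝ
  | 0, _ => 0
  | (n + 1), s => ⨆ a : A, (r s a + cvar α (p s a) (Vstar r p α n))

/-- Iterated-CVaR policy evaluation with `n` steps remaining, where the policy `π` is indexed
by the number of remaining steps. -/
noncomputable def Vpi {S A : Type*} [Fintype S]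
    (r : S → A → ℝ) (p : S → A → S → ℝ) (α : ℝ) (π : ℕ → S → A) : ℕ → S → ℝ
  | 0, _ => 0
  | (n + 1), s => r s (π n s) + cvar α (p s (π n s)) (Vpi r p α π n)

theorem greedy_policy_is_optimal {S A : Type*} [Fintype S] [Fintype A] [Nonempty S] [Nonempty A]
    (r : S → A → ℝ) (p : S → A → S → ℝ) (α : ℝ) (hα : 0 < α) (hα1 : α ≤ 1)
    (hp : ∀ s a s', 0 ≤ p s a s') (hp1 : ∀ s a, ∑ s', p s a s' = 1)
    (H : ℕ) (hH : 1 ≤ H)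
    (π : ℕ → S → A)
    (hgreedy : ∀ n s a, r s a + cvar α (p s a) (Vstar r p α n) ≤
        r s (π n s) + cvar α (p s (π n s)) (Vstar r p α n)) :
    ∀ n, n ≤ H → ∀ s, Vpi r p α π n s = Vstar r p α n s := by
  have key : ∀ n s, Vpi r p α π n s = Vstar r p α n s := by
    intro n
    induction n with
    | zero => intro s; rfl
    | succ n ih =>
      intro s
      have hfun : Vpi r p α π n = Vstar r p α n := funext ih
      show r s (π n s) + cvar α (p s (π n s)) (Vpi r p α π n) = _
      rw [hfun]
      show _ = ⨆ a : A, (r s a + cvar α (p s a) (Vstar r p α n))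
      refine le_antisymm ?_ (ciSup_le fun a => hgreedy n s a)
      exact le_ciSup (f := fun a => r s a + cvar α (p s a) (Vstar r p α n)) (Set.Finite.bddAbove (Set.finite_range _)) (π n s)
  intro n _ s; exact key n s
end

section
/- Optimistic value dominance in iterated-CVaR value iteration: if for each step h and state-action pair the optimistic Q-value is defined by Q̄_h(s,a) = min{ r(s,a) + CVaR^α(V̄_{h+1}; p̂(·|s,a)) + b_h(s,a), H }, V̄_h(s) = max_a Q̄_h(s,a), V̄_{H+1} ≡ 0, and the bonus compensates the estimation error, i.e., b_h(s,a) ≥ CVaR^α(V*_{h+1}; p(·|s,a)) − CVaR^α(V*_{h+1}; p̂(·|s,a)) for all (s,a,h), and rewards satisfy 0 ≤ r(s,a) ≤ 1 so that 0 ≤ V*_h ≤ H, then V̄_h(s) ≥ V*_h(s) for all h and s. -/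
open Finset

/-- Optimistic iterated-CVaR value iteration with `n` steps remaining, using the empirical
kernel `phat`, exploration bonuses `b`, and clipping at the horizon `H`:
`Q̄_{n+1}(s,a) = min (r(s,a) + CVaR^α(V̄_n; p̂(·|s,a)) + b_n(s,a)) H`, `V̄_{n+1}(s) = max_a Q̄_{n+1}(s,a)`. -/
noncomputable def Vbar {S A : Type*} [Fintype S]
    (r : S → A → ℝ) (phat : S → A → S → ℝ) (α : ℝ) (b : ℕ → S → A → ℝ)
    (H : ℕ) : ℕ → S → ℝ
  | 0, _ => 0
  | (n + 1), s => ⨆ a : A, min (r s a + cvar α (phat s a) (Vbar r phat α b H n) + b n s a) (H : ℝ)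

section Aux

variable {S : Type*} [Fintype S]

lemma cvar_term_le {α : ℝ} (hα : 0 < α) (hα1 : α ≤ 1) {p V : S → ℝ}
    (hp : ∀ s, 0 ≤ p s) (hp1 : ∑ s, p s = 1) {M : ℝ} (hM : ∀ s, V s ≤ M) (x : ℝ) :
    x - (1 / α) * ∑ s, p s * max (x - V s) 0 ≤ M := by
  have hS0 : (0:ℝ) ≤ ∑ s, p s * max (x - V s) 0 := by
    apply Finset.sum_nonneg
    intro s _
    exact mul_nonneg (hp s) (le_max_right _ _)
  have h1α : (1:ℝ) ≤ 1 / α := by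
    rw [le_div_iff₀ hα]; linarith
  have h2 : ∑ s, p s * (x - M) ≤ ∑ s, p s * max (x - V s) 0 := by
    apply Finset.sum_le_sum
    intro s _
    apply mul_le_mul_of_nonneg_left _ (hp s)
    exact le_trans (by linarith [hM s]) (le_max_left (x - V s) 0)
  have h3 : ∑ s, p s * (x - M) = x - M := by
    rw [← Finset.sum_mul, hp1, one_mul]
  nlinarith

lemma cvar_bddAbove {α : ℝ} (hα : 0 < α) (hα1 : α ≤ 1) {p V : S → ℝ}
    (hp : ∀ s, 0 ≤ p s) (hp1 : ∑ s, p s = 1) {M : ℝ} (hM : ∀ s, V s ≤ M) :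
    BddAbove (Set.range fun x : ℝ => x - (1 / α) * ∑ s, p s * max (x - V s) 0) := by
  refine ⟨M, ?_⟩
  rintro y ⟨x, rfl⟩
  exact cvar_term_le hα hα1 hp hp1 hM x

lemma cvar_le {α : ℝ} (hα : 0 < α) (hα1 : α ≤ 1) {p V : S → ℝ}
    (hp : ∀ s, 0 ≤ p s) (hp1 : ∑ s, p s = 1) {M : ℝ} (hM : ∀ s, V s ≤ M) :
    cvar α p V ≤ M :=
  ciSup_le (cvar_term_le hα hα1 hp hp1 hM)

lemma cvar_nonneg {α : ℝ} (hα : 0 < α) (hα1 : α ≤ 1) {p V : S → ℝ}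
    (hp : ∀ s, 0 ≤ p s) (hp1 : ∑ s, p s = 1) {M : ℝ} (hM : ∀ s, V s ≤ M)
    (hV0 : ∀ s, 0 ≤ V s) : 0 ≤ cvar α p V := by
  have h := le_ciSup (cvar_bddAbove hα hα1 hp hp1 hM) (0:ℝ)
  have h0 : (0:ℝ) - (1 / α) * ∑ s, p s * max ((0:ℝ) - V s) 0 = 0 := by
    have : ∀ s ∈ Finset.univ, p s * max ((0:ℝ) - V s) 0 = 0 := by
      intro s _
      have : max ((0:ℝ) - V s) 0 = 0 := max_eq_right (by linarith [hV0 s])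
      rw [this, mul_zero]
    rw [Finset.sum_eq_zero this]; ring
  calc (0:ℝ) = (0:ℝ) - (1 / α) * ∑ s, p s * max ((0:ℝ) - V s) 0 := h0.symm
    _ ≤ cvar α p V := h

lemma cvar_mono {α : ℝ} (hα : 0 < α) (hα1 : α ≤ 1) {p V W : S → ℝ}
    (hp : ∀ s, 0 ≤ p s) (hp1 : ∑ s, p s = 1) {M : ℝ} (hM : ∀ s, W s ≤ M)
    (hVW : ∀ s, V s ≤ W s) : cvar α p V ≤ cvar α p W := by
  apply ciSup_mono (cvar_bddAbove hα hα1 hp hp1 hM)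
  intro x
  have : ∑ s, p s * max (x - W s) 0 ≤ ∑ s, p s * max (x - V s) 0 := by
    apply Finset.sum_le_sum
    intro s _
    apply mul_le_mul_of_nonneg_left _ (hp s)
    exact max_le_max (by linarith [hVW s]) le_rfl
  have h1α : (0:ℝ) ≤ 1 / α := by positivity
  nlinarith

lemma Vstar_bounds {S A : Type*} [Fintype S] [Fintype A] [Nonempty A]
    (r : S → A → ℝ) (p : S → A → S → ℝ) (α : ℝ) (hα : 0 < α) (hα1 : α ≤ 1)
    (hr0 : ∀ s a, 0 ≤ r s a) (hr1 : ∀ s a, r s a ≤ 1)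
    (hp : ∀ s a s', 0 ≤ p s a s') (hp1 : ∀ s a, ∑ s', p s a s' = 1) :
    ∀ n s, 0 ≤ Vstar r p α n s ∧ Vstar r p α n s ≤ n := by
  intro n
  induction n with
  | zero => intro s; simp [Vstar]
  | succ n ih =>
    intro s
    have hub : ∀ a : A, r s a + cvar α (p s a) (Vstar r p α n) ≤ (n + 1 : ℕ) := by
      intro a
      have := cvar_le hα hα1 (hp s a) (hp1 s a) (M := (n:ℝ)) (fun s' => (ih s').2)
      push_cast
      linarith [hr1 s a]
    constructor
    · obtain ⟨a0⟩ := (inferInstance : Nonempty A)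
      have hnn : (0:ℝ) ≤ r s a0 + cvar α (p s a0) (Vstar r p α n) := by
        have := cvar_nonneg hα hα1 (hp s a0) (hp1 s a0) (M := (n:ℝ))
          (fun s' => (ih s').2) (fun s' => (ih s').1)
        linarith [hr0 s a0]
      refine hnn.trans ?_
      exact le_ciSup (Set.Finite.bddAbove (Set.finite_range
        (fun a : A => r s a + cvar α (p s a) (Vstar r p α n)))) a0
    · exact ciSup_le hub

lemma Vbar_le_H {S A : Type*} [Fintype S] [Fintype A] [Nonempty A]
    (r : S → A → ℝ) (phat : S → A → S → ℝ) (α : ℝ) (b : ℕ → S → A → ℝ) (H : ℕ) :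
    ∀ n s, Vbar r phat α b H n s ≤ H := by
  intro n
  cases n with
  | zero => intro s; simp [Vbar]
  | succ n =>
    intro s
    exact ciSup_le fun a => min_le_right _ _

end Aux

theorem optimistic_value_dominance {S A : Type*} [Fintype S] [Fintype A] [Nonempty S] [Nonempty A]
    (r : S → A → ℝ) (p phat : S → A → S → ℝ) (α : ℝ) (hα : 0 < α) (hα1 : α ≤ 1)
    (hr0 : ∀ s a, 0 ≤ r s a) (hr1 : ∀ s a, r s a ≤ 1)
    (hp : ∀ s a s', 0 ≤ p s a s') (hp1 : ∀ s a, ∑ s', p s a s' = 1)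
    (hphat : ∀ s a s', 0 ≤ phat s a s') (hphat1 : ∀ s a, ∑ s', phat s a s' = 1)
    (H : ℕ) (hH : 1 ≤ H)
    (b : ℕ → S → A → ℝ) (hb0 : ∀ n s a, 0 ≤ b n s a)
    (hbonus : ∀ n s a,
      cvar α (p s a) (Vstar r p α n) - cvar α (phat s a) (Vstar r p α n) ≤ b n s a) :
    ∀ n, n ≤ H → ∀ s, Vstar r p α n s ≤ Vbar r phat α b H n s := by
  intro n
  induction n with
  | zero => intro _ s; simp [Vstar, Vbar]
  | succ n ih =>
    intro hn s
    have hnH : n ≤ H := le_of_lt (Nat.lt_of_succ_le hn)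
    have ihs := ih hnH
    have hVs := Vstar_bounds r p α hα hα1 hr0 hr1 hp hp1
    have hVbH := Vbar_le_H r phat α b H (A := A)
    show (⨆ a : A, (r s a + cvar α (p s a) (Vstar r p α n))) ≤
      ⨆ a : A, min (r s a + cvar α (phat s a) (Vbar r phat α b H n) + b n s a) (H : ℝ)
    apply ciSup_mono (Set.Finite.bddAbove (Set.finite_range _))
    intro a
    have h1 : r s a + cvar α (p s a) (Vstar r p α n) ≤ (H : ℝ) := by
      have := cvar_le hα hα1 (hp s a) (hp1 s a) (M := (n:ℝ)) (fun s' => (hVs n s').2)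
      have hn' : (n:ℝ) + 1 ≤ (H:ℝ) := by exact_mod_cast hn
      linarith [hr1 s a]
    have h2 : r s a + cvar α (p s a) (Vstar r p α n) ≤
        r s a + cvar α (phat s a) (Vbar r phat α b H n) + b n s a := by
      have hmono : cvar α (phat s a) (Vstar r p α n) ≤
          cvar α (phat s a) (Vbar r phat α b H n) :=
        cvar_mono hα hα1 (hphat s a) (hphat1 s a) (M := (H:ℝ)) (hVbH n) ihs
      have := hbonus n s a
      linarith
    exact le_min h2 h1
end
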